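/- Let n ≥ 1, let U : ℝⁿ → ℝ be continuously differentiable, let f_U : ℝⁿ → ℝⁿ be continuous with ⟨∇U(x), f_U(x)⟩ = 0 for all x ∈ ℝⁿ, and set f := -∇U + f_U. Let σ > 0, T > 0, and let φ : [0,T] → ℝⁿ be a C¹ path satisfying the time-reversed ODE φ̇(t) = ∇U(φ(t)) + f_U(φ(t)) for all t ∈ [0,T]. Then the Freidlin–Wentzell action of φ equals exactly S(φ) = (4/σ²)·(U(φ(T)) − U(φ(0))). -/

import Mathlib

open MeasureTheory
open scoped RealInnerProductSpace

/-! Along the reversed path, `φ̇ - f(φ) = 2 ∇U(φ)`, so the integrand of the action is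
`4 ‖∇U(φ)‖²`. Orthogonality of `∇U` and `f_U` gives `(U ∘ φ)' = ⟪∇U(φ), φ̇⟫ = ‖∇U(φ)‖²`,
so the fundamental theorem of calculus evaluates the integral as `U(φ(T)) - U(φ(0))`. -/

section Gradient

variable {E : Type*} [NormedAddCommGroup E] [InnerProductSpace ℝ E] [CompleteSpace E]

theorem ContDiff.continuous_gradient {U : E → ℝ} (hU : ContDiff ℝ 1 U) :
    Continuous (gradient U) :=
  (InnerProductSpace.toDual ℝ E).symm.continuous.comp (hU.continuous_fderiv one_ne_zero)

theorem HasGradientAt.comp_hasDerivWithinAt {U : E → ℝ} {φ : ℝ → E} {g v : E} {s : Set ℝ}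
    {t : ℝ} (hU : HasGradientAt U g (φ t)) (hφ : HasDerivWithinAt φ v s t) :
    HasDerivWithinAt (fun r => U (φ r)) ⟪g, v⟫ s t := by
  have h := hU.hasFDerivAt.comp_hasDerivWithinAt t hφ
  rwa [InnerProductSpace.toDual_apply_apply] at h

theorem integral_norm_sq_gradient_eq_sub {U : E → ℝ} (hU : ContDiff ℝ 1 U) {φ φ' : ℝ → E}
    {a b : ℝ} (hab : a ≤ b)
    (hφ : ∀ t ∈ Set.Icc a b, HasDerivWithinAt φ (φ' t) (Set.Icc a b) t)
    (hslope : ∀ t ∈ Set.Icc a b, ⟪gradient U (φ t), φ' t⟫ = ‖gradient U (φ t)‖ ^ 2) :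
    ∫ t in a..b, ‖gradient U (φ t)‖ ^ 2 = U (φ b) - U (φ a) := by
  have hφcont : ContinuousOn φ (Set.Icc a b) := fun t ht => (hφ t ht).continuousWithinAt
  have hderiv : ∀ t ∈ Set.Icc a b,
      HasDerivWithinAt (fun s => U (φ s)) (‖gradient U (φ t)‖ ^ 2) (Set.Icc a b) t := by
    intro t ht
    rw [← hslope t ht]
    exact ((hU.differentiable one_ne_zero) (φ t)).hasGradientAt.comp_hasDerivWithinAt (hφ t ht)
  refine intervalIntegral.integral_eq_sub_of_hasDeriv_right_of_le hab
    (hU.continuous.comp_continuousOn hφcont) (fun t ht => ?_) ?_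
  · exact ((hderiv t (Set.mem_Icc_of_Ioo ht)).hasDerivAt
      (Icc_mem_nhds ht.1 ht.2)).hasDerivWithinAt
  · refine ContinuousOn.intervalIntegrable ?_
    rw [Set.uIcc_of_le hab]
    exact (hU.continuous_gradient.comp_continuousOn hφcont).norm.pow 2

end Gradient

theorem action_of_reversed_path_general (n : ℕ)
    (U : EuclideanSpace ℝ (Fin n) → ℝ) (hU : ContDiff ℝ 1 U)
    (fU : EuclideanSpace ℝ (Fin n) → EuclideanSpace ℝ (Fin n))
    (horth : ∀ x, ⟪gradient U x, fU x⟫ = 0)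
    (f : EuclideanSpace ℝ (Fin n) → EuclideanSpace ℝ (Fin n))
    (hf : ∀ x, f x = -gradient U x + fU x)
    (σ T : ℝ) (hT : 0 < T)
    (φ φ' : ℝ → EuclideanSpace ℝ (Fin n))
    (hφ : ∀ t ∈ Set.Icc (0:ℝ) T, HasDerivWithinAt φ (φ' t) (Set.Icc (0:ℝ) T) t)
    (hODE : ∀ t ∈ Set.Icc (0:ℝ) T, φ' t = gradient U (φ t) + fU (φ t)) :
    (1/σ^2) * ∫ t in (0:ℝ)..T, ‖φ' t - f (φ t)‖^2 =
      (4/σ^2) * (U (φ T) - U (φ 0)) := by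
  have hslope : ∀ t ∈ Set.Icc 0 T, ⟪gradient U (φ t), φ' t⟫ = ‖gradient U (φ t)‖ ^ 2 := by
    intro t ht
    rw [hODE t ht, inner_add_right, horth, real_inner_self_eq_norm_sq, add_zero]
  have hintegrand : ∀ t ∈ Set.uIcc 0 T, ‖φ' t - f (φ t)‖ ^ 2 = 4 * ‖gradient U (φ t)‖ ^ 2 := by
    intro t ht
    rw [Set.uIcc_of_le hT.le] at ht
    have hdiff : φ' t - f (φ t) = (2 : ℝ) • gradient U (φ t) := by
      rw [hODE t ht, hf]
      module
    rw [hdiff, norm_smul, mul_pow]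
    norm_num
  rw [intervalIntegral.integral_congr hintegrand, intervalIntegral.integral_const_mul,
    integral_norm_sq_gradient_eq_sub hU hT.le hφ hslope]
  ring

/-- under an orthogonal decomposition `f = -∇U + f_U`, a path
following the time-reversed ODE `φ̇ = ∇U(φ) + f_U(φ)` has Freidlin–Wentzell
action exactly `(4/σ²)·(U(φ(T)) − U(φ(0)))`. -/
theorem action_of_reversed_path (n : ℕ) (hn : 1 ≤ n)
    (U : EuclideanSpace ℝ (Fin n) → ℝ) (hU : ContDiff ℝ 1 U)
    (fU : EuclideanSpace ℝ (Fin n) → EuclideanSpace ℝ (Fin n)) (hfU : Continuous fU)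
    (horth : ∀ x, ⟪gradient U x, fU x⟫ = 0)
    (f : EuclideanSpace ℝ (Fin n) → EuclideanSpace ℝ (Fin n))
    (hf : ∀ x, f x = -gradient U x + fU x)
    (σ T : ℝ) (hσ : 0 < σ) (hT : 0 < T)
    (φ φ' : ℝ → EuclideanSpace ℝ (Fin n))
    (hφ : ∀ t ∈ Set.Icc (0:ℝ) T, HasDerivWithinAt φ (φ' t) (Set.Icc (0:ℝ) T) t)
    (hφ' : ContinuousOn φ' (Set.Icc (0:ℝ) T))
    (hODE : ∀ t ∈ Set.Icc (0:ℝ) T, φ' t = gradient U (φ t) + fU (φ t)) :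
    (1/σ^2) * ∫ t in (0:ℝ)..T, ‖φ' t - f (φ t)‖^2 =
      (4/σ^2) * (U (φ T) - U (φ 0)) :=
  action_of_reversed_path_general n U hU fU horth f hf σ T hT φ φ' hφ hODE
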